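/- (Misère Mex Rule) Let G be an impartial game whose options are precisely the Nim-heaps *a₁, ..., *a_k, and suppose at least one a_i is 0 or 1. Let m = mex{a₁, ..., a_k}. Then G equals *m under misère equality: for every impartial game X, G + X and *m + X have the same misère outcome. -/

import Mathlib

/-! The combinatorial game theory of `SetTheory.PGame` has been removed from Mathlib; the
definitions it provided and that the statement uses are reproduced here with their old meaning. -/

universe u

namespace SetTheory

/-- Pre-games (as in Mathlib's former `SetTheory.PGame`). -/
inductive PGame : Type (u + 1)
  | mk : ∀ α β : Type u, (α → PGame) → (β → PGame) → PGame

namespace PGame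

/-- Simultaneously `x ≤ y` (first component) and `x ⧏ y` (second component). -/
noncomputable def leLF (x : PGame.{u}) : PGame.{u} → Prop × Prop := by
  induction x with | mk xl xr xL xR IHxl IHxr => ?_
  intro y
  induction y with | mk yl yr yL yR IHyl IHyr => ?_
  exact ((∀ i, (IHxl i (mk yl yr yL yR)).2) ∧ ∀ j, (IHyr j).2,
    (∃ i, (IHyl i).1) ∨ ∃ j, (IHxr j (mk yl yr yL yR)).1)

instance : LE PGame.{u} := ⟨fun x y => (leLF x y).1⟩

/-- Negation of pre-games. -/
def neg : PGame.{u} → PGame.{u}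
  | mk l r L R => mk r l (fun i => neg (R i)) (fun i => neg (L i))

instance : Neg PGame.{u} := ⟨neg⟩

noncomputable instance : Add PGame.{u} :=
  ⟨fun x y => by
    induction x generalizing y with | mk xl xr _ _ IHxl IHxr => _
    induction y with | mk yl yr yL yR IHyl IHyr => _
    have y := mk yl yr yL yR
    refine ⟨xl ⊕ yl, xr ⊕ yr, Sum.rec ?_ ?_, Sum.rec ?_ ?_⟩
    · exact fun i => IHxl i y
    · exact IHyl
    · exact fun i => IHxr i y
    · exact IHyr⟩

/-- Auxiliary for `Impartial`: `G ≈ -G` and all options are (hereditarily) impartial. -/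
def ImpartialAux : PGame.{u} → Prop
  | mk l r L R => (mk l r L R ≤ -mk l r L R ∧ -mk l r L R ≤ mk l r L R) ∧
      (∀ i, ImpartialAux (L i)) ∧ ∀ j, ImpartialAux (R j)

/-- Impartial pre-games. -/
class Impartial (G : PGame.{u}) : Prop where
  out : ImpartialAux G

/-- The nim pre-game of an ordinal. -/
noncomputable def nim (o : Ordinal.{u}) : PGame.{u} :=
  ⟨o.ToType, o.ToType,
    fun x => nim (Ordinal.ToType.mk.symm x).1,
    fun x => nim (Ordinal.ToType.mk.symm x).1⟩
termination_by o
decreasing_by all_goals exact (Ordinal.ToType.mk.symm x).2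

end PGame

end SetTheory

open SetTheory PGame

/-- `G` is a misère P-position: `G` has at least one option and every option of `G` is a
misère N-position (i.e. not a misère P-position).  In particular the empty game `0` is a
misère N-position.  (For an impartial game the options are the left moves.) -/
def MisereP : PGame → Prop
  | PGame.mk l _ L _ => Nonempty l ∧ ∀ i, ¬ MisereP (L i)

/-! Induct on `X`. Every option `*j` (`j < m`) of `*m` is an option of `G`, and every other
option `*aᵢ` of `G` has `aᵢ > m`, hence is reversible through `*m`: a move to `*aᵢ + X` is
answered by the move back to `*m + X`. So `G + X` and `*m + X` are P-positions together, except
possibly when `*m + X` is terminal, i.e. `m = 0` and `X` has no move. There `*m + X` is an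
N-position, and so is `G + X`, since `0 ∉ {aᵢ}` forces `*1` to be an option of `G` and
`*1 + X` is a P-position. -/

namespace SetTheory.PGame

def leftOptions : PGame.{u} → Set PGame.{u}
  | mk _ _ L _ => Set.range L

@[simp]
theorem leftOptions_mk {l r : Type u} (L : l → PGame.{u}) (R : r → PGame.{u}) :
    (mk l r L R).leftOptions = Set.range L :=
  rfl

theorem mk_add_mk {xl xr yl yr : Type u} (xL : xl → PGame.{u}) (xR : xr → PGame.{u})
    (yL : yl → PGame.{u}) (yR : yr → PGame.{u}) :
    mk xl xr xL xR + mk yl yr yL yR =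
      mk (xl ⊕ yl) (xr ⊕ yr) (Sum.elim (xL · + mk yl yr yL yR) (mk xl xr xL xR + yL ·))
        (Sum.elim (xR · + mk yl yr yL yR) (mk xl xr xL xR + yR ·)) := by
  rfl

theorem leftOptions_add (x y : PGame.{u}) :
    (x + y).leftOptions = (· + y) '' x.leftOptions ∪ (x + ·) '' y.leftOptions := by
  cases x; cases y
  rw [mk_add_mk, leftOptions_mk, Set.Sum.elim_range]
  simp only [leftOptions_mk, ← Set.range_comp]
  rfl

theorem leftOptions_nim (o : Ordinal.{u}) : (nim o).leftOptions = nim '' Set.Iio o := by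
  rw [nim, leftOptions_mk]
  exact (Ordinal.ToType.mk.symm.surjective.range_comp (nim ∘ Subtype.val)).trans
    (by rw [Set.range_comp, Subtype.range_coe])

theorem leftOptions_nim_natCast (n : ℕ) :
    (nim.{u} n).leftOptions = (fun j : ℕ => nim.{u} j) '' Set.Iio n := by
  rw [leftOptions_nim]
  ext x
  simp only [Set.mem_image, Set.mem_Iio]
  constructor
  · rintro ⟨o, ho, rfl⟩
    obtain ⟨j, rfl⟩ := Ordinal.lt_omega0.1 (ho.trans (Ordinal.natCast_lt_omega0 n))
    exact ⟨j, by exact_mod_cast ho, rfl⟩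
  · rintro ⟨j, hj, rfl⟩
    exact ⟨j, by exact_mod_cast hj, rfl⟩

theorem leftOptions_nim_zero : (nim.{u} 0).leftOptions = ∅ := by
  simp [leftOptions_nim]

end SetTheory.PGame

theorem misereP_iff (x : PGame.{u}) :
    MisereP x ↔ x.leftOptions.Nonempty ∧ ∀ y ∈ x.leftOptions, ¬ MisereP y := by
  cases x
  simp only [MisereP, leftOptions_mk, Set.range_nonempty_iff_nonempty, Set.forall_mem_range]

theorem not_misereP_of_leftOptions_eq_empty {x : PGame.{u}} (hx : x.leftOptions = ∅) :
    ¬ MisereP x := fun h => by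
  simpa [hx] using ((misereP_iff x).1 h).1

theorem misereP_add_iff (x y : PGame.{u}) :
    MisereP (x + y) ↔ (x.leftOptions.Nonempty ∨ y.leftOptions.Nonempty) ∧
      (∀ x' ∈ x.leftOptions, ¬ MisereP (x' + y)) ∧ ∀ y' ∈ y.leftOptions, ¬ MisereP (x + y') := by
  simp only [misereP_iff (x + y), leftOptions_add, Set.union_nonempty, Set.image_nonempty,
    Set.mem_union, or_imp, forall_and, Set.forall_mem_image]

theorem misereP_add_iff_of_leftOptions_eq_empty (x : PGame.{u}) {y : PGame.{u}}
    (hy : y.leftOptions = ∅) : MisereP (x + y) ↔ MisereP x := by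
  induction x with
  | mk l r L R ih =>
    rw [misereP_add_iff, misereP_iff (mk l r L R)]
    simp only [hy, leftOptions_mk, Set.forall_mem_range, ih, Set.not_nonempty_empty, or_false,
      Set.mem_empty_iff_false, IsEmpty.forall_iff, implies_true, and_true]

theorem misereP_nim_one : MisereP (nim.{u} 1) := by
  rw [misereP_iff, leftOptions_nim]
  simp [not_misereP_of_leftOptions_eq_empty leftOptions_nim_zero]

/-- Misère equality, tested against all games `X` rather than only the impartial ones. -/
def MisereEq (G H : PGame.{u}) : Prop :=
  ∀ X : PGame.{u}, MisereP (G + X) ↔ MisereP (H + X)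

theorem misereEq_of_leftOptions {G H : PGame.{u}} (hG : G.leftOptions.Nonempty)
    (hHG : H.leftOptions ⊆ G.leftOptions)
    (hGH : ∀ G' ∈ G.leftOptions, G' ∈ H.leftOptions ∨ H ∈ G'.leftOptions)
    (hH : H.leftOptions = ∅ → ¬ MisereP G) : MisereEq G H := by
  intro X
  induction X with
  | mk l r L R ih =>
    constructor
    · intro hGX
      obtain ⟨-, hGX', hXG⟩ := (misereP_add_iff _ _).1 hGX
      refine (misereP_add_iff _ _).2 ⟨?_, fun H' hH' => hGX' H' (hHG hH'), ?_⟩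
      · by_contra hnone
        rw [not_or, Set.not_nonempty_iff_eq_empty, Set.not_nonempty_iff_eq_empty] at hnone
        exact hH hnone.1 ((misereP_add_iff_of_leftOptions_eq_empty G hnone.2).1 hGX)
      · rw [leftOptions_mk, Set.forall_mem_range] at hXG ⊢
        exact fun i => (ih i).not.1 (hXG i)
    · intro hHX
      obtain ⟨-, hHX', hXH⟩ := (misereP_add_iff _ _).1 hHX
      refine (misereP_add_iff _ _).2 ⟨Or.inl hG, fun G' hG' => ?_, ?_⟩
      · rcases hGH G' hG' with hG'H | hHG'
        · exact hHX' G' hG'H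
        · exact fun hG'X => ((misereP_add_iff _ _).1 hG'X).2.1 H hHG' hHX
      · rw [leftOptions_mk, Set.forall_mem_range] at hXH ⊢
        exact fun i => (ih i).not.2 (hXH i)

theorem misereEq_nim_mex {ι : Type u} (a : ι → ℕ) {m : ℕ} (hm : m ∉ Set.range a)
    (hlt : ∀ j < m, j ∈ Set.range a) (h01 : 0 ∈ Set.range a ∨ 1 ∈ Set.range a) :
    MisereEq (mk ι ι (fun i => nim (a i)) (fun i => nim (a i))) (nim m) := by
  have hG : (mk ι ι (fun i => nim (a i)) (fun i => nim (a i))).leftOptions =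
      (fun j : ℕ => nim.{u} j) '' Set.range a := by
    rw [leftOptions_mk, ← Set.range_comp]; rfl
  refine misereEq_of_leftOptions ?_ ?_ ?_ ?_
  · rw [hG]
    exact (h01.elim Set.nonempty_of_mem Set.nonempty_of_mem).image _
  · rw [hG, leftOptions_nim_natCast]
    exact Set.image_mono hlt
  · rw [hG]
    rintro _ ⟨_, ⟨i, rfl⟩, rfl⟩
    rw [leftOptions_nim_natCast, leftOptions_nim_natCast]
    rcases lt_or_gt_of_ne fun h => hm ⟨i, h⟩ with hi | hi
    · exact Or.inl ⟨a i, hi, rfl⟩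
    · exact Or.inr ⟨m, hi, rfl⟩
  · intro hempty
    have hm0 : m = 0 := by
      by_contra hm0
      rw [leftOptions_nim_natCast] at hempty
      exact hempty.subset ⟨0, Nat.pos_of_ne_zero hm0, rfl⟩
    have h1 : 1 ∈ Set.range a := h01.resolve_left (hm0 ▸ hm)
    rw [misereP_iff, hG]
    exact fun ⟨_, hN⟩ => hN (nim 1) ⟨1, h1, by simp⟩ misereP_nim_one

/-- **Misère Mex Rule.** Let `G` be the impartial game whose options are precisely the
Nim-heaps `*a₁, …, *a_k`, with at least one `aᵢ` equal to `0` or `1`, and let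
`m = mex {a₁, …, a_k}`.  Then `G` equals `*m` under misère equality: for every impartial
game `X`, the games `G + X` and `*m + X` have the same misère outcome. -/
theorem misere_mex_rule (k : ℕ) (a : Fin k → ℕ) (h : ∃ i, a i = 0 ∨ a i = 1) :
    ∀ X : PGame.{0}, X.Impartial →
      (MisereP
          (PGame.mk (Fin k) (Fin k)
            (fun i => nim (a i : Ordinal)) (fun i => nim (a i : Ordinal)) + X) ↔
        MisereP (nim ((sInf {n : ℕ | n ∉ Set.range a} : ℕ) : Ordinal) + X)) := by
  intro X _
  have hmex : {n : ℕ | n ∉ Set.range a}.Nonempty := (Set.finite_range a).infinite_compl.nonempty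
  refine misereEq_nim_mex a (Nat.sInf_mem hmex) (fun j hj => ?_) ?_ X
  · exact not_not.1 (Nat.notMem_of_lt_sInf hj)
  · obtain ⟨i, hi | hi⟩ := h
    exacts [Or.inl ⟨i, hi⟩, Or.inr ⟨i, hi⟩]
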